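/- Fix a logistic regression F over n binary features with weight vector w. The set of naive Bayes distributions (with parameters in (0,1)) conforming with F is in bijection with (0,1)ⁿ, via the map sending P to the vector (P(x₁=1|c), …, P(xₙ=1|c)). -/

import Mathlib

open Finset

noncomputable def sigmoid (t : ℝ) : ℝ := 1 / (1 + Real.exp (-t))

/-!
Both the naive Bayes posterior and the logistic regression are best read on the log-odds scale.
There the naive Bayes posterior log-odds is `logit P(c) + ∑ᵢ log (P(xᵢ|c) / P(xᵢ|c̄))`, a sum of
one function of each coordinate, and it agrees with `w₀ + ∑ᵢ wᵢ xᵢ` on the whole cube `{0,1}ⁿ` iff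
it does at `0` and at the unit vectors. These `n + 1` equations say
`logit P(xᵢ=1|c̄) = logit P(xᵢ=1|c) - wᵢ` and
`logit P(c) = w₀ - ∑ᵢ log (P(x̄ᵢ|c) / P(x̄ᵢ|c̄))`, so every parameter is determined by `θ` and
every `θ` is attained.
-/

section Cube

variable {ι G : Type*} [Fintype ι] [AddCommGroup G]

theorem sum_apply_eq_sum_false_add (f : ι → Bool → G) (x : ι → Bool) :
    ∑ i, f i (x i) = ∑ i, f i false + ∑ i, if x i then f i true - f i false else 0 := by
  rw [← sum_add_distrib]
  refine sum_congr rfl fun i _ => ?_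
  cases x i <;> simp

theorem forall_add_sum_eq_add_sum_iff [DecidableEq ι] (c d : G) (f g : ι → Bool → G) :
    (∀ x : ι → Bool, c + ∑ i, f i (x i) = d + ∑ i, g i (x i)) ↔
      c + ∑ i, f i false = d + ∑ i, g i false ∧
        ∀ i, f i true - f i false = g i true - g i false := by
  have hf := sum_apply_eq_sum_false_add f
  have hg := sum_apply_eq_sum_false_add g
  constructor
  · intro h
    have h₀ := h fun _ => false
    refine ⟨h₀, fun i => ?_⟩
    have hi := h fun j => decide (j = i)
    rw [hf, hg] at hi
    simp only [decide_eq_true_eq, sum_ite_eq', mem_univ, if_true, ← add_assoc, h₀] at hi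
    exact add_left_cancel hi
  · rintro ⟨h₀, hΔ⟩ x
    rw [hf, hg, ← add_assoc, ← add_assoc, h₀]
    simp only [hΔ]

end Cube

section Logit

theorem sigmoid_eq_real_sigmoid : sigmoid = Real.sigmoid :=
  funext fun _ => one_div _

theorem sigmoid_mem_Ioo (t : ℝ) : sigmoid t ∈ Set.Ioo (0 : ℝ) 1 := by
  rw [sigmoid_eq_real_sigmoid]
  exact ⟨Real.sigmoid_pos t, Real.sigmoid_lt_one t⟩

theorem sigmoid_injective : Function.Injective sigmoid := by
  rw [sigmoid_eq_real_sigmoid]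
  exact Real.sigmoid_injective

theorem sigmoid_log_div {a b : ℝ} (ha : 0 < a) (hb : 0 < b) :
    sigmoid (Real.log (a / b)) = a / (a + b) := by
  rw [sigmoid, ← Real.log_inv, inv_div, Real.exp_log (div_pos hb ha)]
  field_simp

theorem div_add_eq_sigmoid_iff {a b : ℝ} (ha : 0 < a) (hb : 0 < b) (t : ℝ) :
    a / (a + b) = sigmoid t ↔ Real.log (a / b) = t := by
  rw [← sigmoid_log_div ha hb, sigmoid_injective.eq_iff]

noncomputable def logit (p : ℝ) : ℝ := Real.log (p / (1 - p))

theorem sigmoid_logit {p : ℝ} (hp : p ∈ Set.Ioo (0 : ℝ) 1) : sigmoid (logit p) = p := by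
  rw [logit, sigmoid_log_div hp.1 (sub_pos.2 hp.2), add_sub_cancel, div_one]

theorem eq_sigmoid_iff_logit_eq {p : ℝ} (hp : p ∈ Set.Ioo (0 : ℝ) 1) (t : ℝ) :
    p = sigmoid t ↔ logit p = t := by
  conv_lhs => rw [← sigmoid_logit hp]
  exact sigmoid_injective.eq_iff

theorem log_div_sub_log_div_eq_logit_sub {a b : ℝ} (ha : a ∈ Set.Ioo (0 : ℝ) 1)
    (hb : b ∈ Set.Ioo (0 : ℝ) 1) :
    Real.log (a / b) - Real.log ((1 - a) / (1 - b)) = logit a - logit b := by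
  have ha' : 1 - a ≠ 0 := (sub_pos.2 ha.2).ne'
  have hb' : 1 - b ≠ 0 := (sub_pos.2 hb.2).ne'
  simp only [logit, Real.log_div ha.1.ne' hb.1.ne', Real.log_div ha' hb', Real.log_div ha.1.ne' ha',
    Real.log_div hb.1.ne' hb']
  ring

end Logit

section NaiveBayes

variable {ι : Type*} [Fintype ι]

def bernoulliLik (θ : ι → ℝ) (x : ι → Bool) : ℝ :=
  ∏ i, if x i then θ i else 1 - θ i

/-- The naive Bayes distribution with prior `p = P(c)`, `θ i = P(xᵢ=1|c)` and
`β i = P(xᵢ=1|c̄)` has posterior `P(c|x) = σ(w₀ + ∑ wᵢ xᵢ)`. -/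
def ConformsToLogistic (w₀ : ℝ) (w : ι → ℝ) (p : ℝ) (θ β : ι → ℝ) : Prop :=
  ∀ x : ι → Bool, p * bernoulliLik θ x / (p * bernoulliLik θ x + (1 - p) * bernoulliLik β x) =
    sigmoid (w₀ + ∑ i, w i * if x i then 1 else 0)

variable {p : ℝ} {θ β : ι → ℝ}

theorem ite_one_sub_mem_Ioo {a : ℝ} (ha : a ∈ Set.Ioo (0 : ℝ) 1) (b : Bool) :
    (if b then a else 1 - a) ∈ Set.Ioo (0 : ℝ) 1 := by
  cases b
  · exact ⟨sub_pos.2 ha.2, sub_lt_self 1 ha.1⟩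
  · exact ha

theorem bernoulliLik_pos (hθ : ∀ i, θ i ∈ Set.Ioo (0 : ℝ) 1) (x : ι → Bool) :
    0 < bernoulliLik θ x :=
  prod_pos fun i _ => (ite_one_sub_mem_Ioo (hθ i) (x i)).1

theorem log_posterior_odds_eq (hp : p ∈ Set.Ioo (0 : ℝ) 1) (hθ : ∀ i, θ i ∈ Set.Ioo (0 : ℝ) 1)
    (hβ : ∀ i, β i ∈ Set.Ioo (0 : ℝ) 1) (x : ι → Bool) :
    Real.log (p * bernoulliLik θ x / ((1 - p) * bernoulliLik β x)) =
      logit p + ∑ i, Real.log ((if x i then θ i else 1 - θ i) / if x i then β i else 1 - β i) := by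
  have hratio i : 0 < (if x i then θ i else 1 - θ i) / if x i then β i else 1 - β i :=
    div_pos (ite_one_sub_mem_Ioo (hθ i) (x i)).1 (ite_one_sub_mem_Ioo (hβ i) (x i)).1
  rw [mul_div_mul_comm, bernoulliLik, bernoulliLik, ← prod_div_distrib,
    Real.log_mul (div_pos hp.1 (sub_pos.2 hp.2)).ne' (prod_pos fun i _ => hratio i).ne',
    Real.log_prod fun i _ => (hratio i).ne', logit]

theorem conformsToLogistic_iff [DecidableEq ι] (w₀ : ℝ) (w : ι → ℝ) (hp : p ∈ Set.Ioo (0 : ℝ) 1)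
    (hθ : ∀ i, θ i ∈ Set.Ioo (0 : ℝ) 1) (hβ : ∀ i, β i ∈ Set.Ioo (0 : ℝ) 1) :
    ConformsToLogistic w₀ w p θ β ↔
      (∀ i, β i = sigmoid (logit (θ i) - w i)) ∧
        p = sigmoid (w₀ - ∑ i, Real.log ((1 - θ i) / (1 - β i))) := by
  have hlogodds : ConformsToLogistic w₀ w p θ β ↔ ∀ x : ι → Bool,
      logit p + ∑ i, Real.log ((if x i then θ i else 1 - θ i) / if x i then β i else 1 - β i) =
        w₀ + ∑ i, w i * if x i then 1 else 0 := by
    refine forall_congr' fun x => ?_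
    rw [div_add_eq_sigmoid_iff (mul_pos hp.1 (bernoulliLik_pos hθ x))
      (mul_pos (sub_pos.2 hp.2) (bernoulliLik_pos hβ x)), log_posterior_odds_eq hp hθ hβ]
  rw [hlogodds, forall_add_sum_eq_add_sum_iff (logit p) w₀
    (fun i b => Real.log ((if b then θ i else 1 - θ i) / if b then β i else 1 - β i))
    (fun i b => w i * if b then 1 else 0)]
  simp only [Bool.false_eq_true, if_false, if_true, mul_zero, mul_one, sum_const_zero, add_zero,
    sub_zero, log_div_sub_log_div_eq_logit_sub (hθ _) (hβ _), eq_sigmoid_iff_logit_eq (hβ _),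
    eq_sigmoid_iff_logit_eq hp]
  constructor
  · rintro ⟨hprior, hlik⟩
    exact ⟨fun i => by linarith [hlik i], by linarith⟩
  · rintro ⟨hlik, hprior⟩
    exact ⟨by linarith, fun i => by linarith [hlik i]⟩

end NaiveBayes

/-- For a fixed logistic regression with weights `(w₀, w)`, the
set of naive Bayes distributions (all parameters in `(0,1)`) conforming with it
is in bijection with `(0,1)ⁿ` via `P ↦ (P(x₁=1|c),…,P(xₙ=1|c))`.  A naive Bayes
distribution is encoded as a triple `(prior, θc, θcb)`. -/
theorem conforming_naiveBayes_bijection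
    (n : ℕ) (w₀ : ℝ) (w : Fin n → ℝ) :
    Function.Bijective
      (fun qq : {q : ℝ × (Fin n → ℝ) × (Fin n → ℝ) //
          (q.1 ∈ Set.Ioo (0 : ℝ) 1 ∧ (∀ i, q.2.1 i ∈ Set.Ioo (0 : ℝ) 1)
            ∧ (∀ i, q.2.2 i ∈ Set.Ioo (0 : ℝ) 1)) ∧
          ∀ x : Fin n → Bool,
            (q.1 * ∏ i, (if x i then q.2.1 i else 1 - q.2.1 i)) /
              (q.1 * ∏ i, (if x i then q.2.1 i else 1 - q.2.1 i)
                + (1 - q.1) * ∏ i, (if x i then q.2.2 i else 1 - q.2.2 i))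
            = sigmoid (w₀ + ∑ i, w i * (if x i then (1 : ℝ) else 0))} =>
        (⟨qq.1.2.1, qq.2.1.2.1⟩ : {θ : Fin n → ℝ // ∀ i, θ i ∈ Set.Ioo (0 : ℝ) 1})) := by
  constructor
  · rintro ⟨⟨p, θ, β⟩, ⟨hp, hθ, hβ⟩, hconf⟩ ⟨⟨p', θ', β'⟩, ⟨hp', _, hβ'⟩, hconf'⟩ h
    obtain rfl : θ = θ' := congrArg Subtype.val h
    obtain ⟨hβ_eq, hp_eq⟩ := (conformsToLogistic_iff w₀ w hp hθ hβ).1 hconf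
    obtain ⟨hβ_eq', hp_eq'⟩ := (conformsToLogistic_iff w₀ w hp' hθ hβ').1 hconf'
    obtain rfl : β = β' := funext fun i => (hβ_eq i).trans (hβ_eq' i).symm
    obtain rfl : p = p' := hp_eq.trans hp_eq'.symm
    rfl
  · rintro ⟨θ, hθ⟩
    let β i := sigmoid (logit (θ i) - w i)
    let p := sigmoid (w₀ - ∑ i, Real.log ((1 - θ i) / (1 - β i)))
    have hβ i : β i ∈ Set.Ioo (0 : ℝ) 1 := sigmoid_mem_Ioo _
    have hconf : ConformsToLogistic w₀ w p θ β :=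
      (conformsToLogistic_iff w₀ w (sigmoid_mem_Ioo _) hθ hβ).2 ⟨fun _ => rfl, rfl⟩
    exact ⟨⟨(p, θ, β), ⟨sigmoid_mem_Ioo _, hθ, hβ⟩, hconf⟩, rfl⟩
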